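/- arXiv:math/0303168 — 4 statements merged into one kernel-verified Lean document; each statement's English description precedes it below -/
import Mathlib

section
/- Let κ be a regular uncountable cardinal. Suppose for each ordinal α < κ we have a pointed set (E_α, ∗) together with maps φ_α : E_α → E_{α+1} sending ∗ to ∗, and such that for every limit ordinal δ < κ, E_δ is the colimit of the directed system (E_α)_{α<δ}. If (1) card(E_α) < κ for all α < κ, and (2) for every α < κ there exists x ∈ E_α with x ≠ ∗ and φ_α(x) = ∗, then we obtain a contradiction (i.e., no such system exists). -/
/-!
Say `y : E α` dies at `β` if it maps to the base point of `E β`. Since `#(E α) < κ = cof κ`,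
there is `H α < κ` such that every `y : E α` dying below `κ` already dies by stage `H α`.
An `ω`-sequence closing off under `H` has supremum a limit `δ < κ` (as `κ` is uncountable)
with `H α < δ` for all `α < δ`. An element `x ≠ ∗` of `E δ` dying at `δ + 1` comes
from some `y : E α` with `α < δ`; then `y` already dies before `δ`, forcing `x = ∗`.
-/

open Cardinal Ordinal Order

universe u

theorem Cardinal.IsRegular.exists_isSuccLimit_forall_lt_of_forall_lt {κ : Cardinal.{u}}
    (hκ : κ.IsRegular) (hunc : ℵ₀ < κ) (f : Ordinal.{u} → Ordinal.{u})
    (hf : ∀ α < κ.ord, f α < κ.ord) :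
    ∃ δ < κ.ord, IsSuccLimit δ ∧ ∀ α < δ, f α < δ := by
  have hlim : IsSuccLimit κ.ord := isSuccLimit_ord hκ.aleph0_le
  set g : Ordinal.{u} → Ordinal.{u} := fun β => succ (β ⊔ ⨆ α : Set.Iio β, f α)
  have hg : ∀ β, (∀ α < β, f α < g β) ∧ β < g β := fun β =>
    ⟨fun α hα => lt_succ_iff.2 <| le_sup_of_le_right <|
      Ordinal.le_iSup (fun a : Set.Iio β => f a) ⟨α, hα⟩,
     lt_succ_iff.2 le_sup_left⟩
  have hgκ : ∀ β < κ.ord, g β < κ.ord := fun β hβ => by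
    refine hlim.succ_lt (max_lt hβ (lift_iSup_lt_of_lt_cof ?_ fun α => hf α (α.2.trans hβ)))
    rwa [← lift_cof, hκ.cof_ord, mk_Iio_ordinal, lift_lift, lift_lt, ← lt_ord]
  have hclosed : ∀ α < nfp g 0, succ α < nfp g 0 ∧ f α < nfp g 0 := fun α hα => by
    obtain ⟨n, hn⟩ := lt_nfp_iff.1 hα
    have hle : g (g^[n] 0) ≤ nfp g 0 := by
      simpa only [Function.iterate_succ_apply'] using iterate_le_nfp g 0 (n + 1)
    exact ⟨(succ_le_of_lt hn).trans_lt ((hg _).2.trans_le hle), ((hg _).1 α hn).trans_le hle⟩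
  refine ⟨nfp g 0, nfp_lt_ord (by rwa [hκ.cof_ord]) hgκ hlim.bot_lt, ?_,
    fun α hα => (hclosed α hα).2⟩
  exact ⟨not_isMin_iff.2 ⟨0, (hg 0).2.trans_le (iterate_le_nfp g 0 1)⟩,
    isSuccPrelimit_iff_succ_lt.2 fun α hα => (hclosed α hα).1⟩

theorem Ordinal.exists_lt_forall_exists_le_of_mk_lt_cof {ι : Type u} {c : Ordinal.{u}}
    (hι : #ι < c.cof) (P : ι → Ordinal.{u} → Prop) :
    ∃ γ < c, ∀ i, ∀ β < c, P i β → ∃ β' ≤ γ, P i β' := by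
  classical
  have hc : 0 < c := by
    rw [pos_iff_ne_zero]
    rintro rfl
    simp at hι
  let w : ι → Ordinal.{u} := fun i => if h : ∃ β < c, P i β then h.choose else 0
  have hw : ∀ i, w i < c := fun i => by
    by_cases h : ∃ β < c, P i β
    · exact (dif_pos h).trans_lt h.choose_spec.1
    · exact (dif_neg h).trans_lt hc
  refine ⟨⨆ i, w i, iSup_lt_of_lt_cof hι hw, fun i β hβ hP => ?_⟩
  have h : ∃ β < c, P i β := ⟨β, hβ, hP⟩
  refine ⟨w i, Ordinal.le_iSup w i, ?_⟩
  simpa only [w, dif_pos h] using h.choose_spec.2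

theorem stmt0_general {κ : Cardinal} (hreg : κ.IsRegular) (hunc : Cardinal.aleph0 < κ)
    (E : Ordinal → Type*) (pt : ∀ α, E α)
    (F : ∀ {α β : Ordinal}, α ≤ β → E α → E β)
    (Fcomp : ∀ {α β γ : Ordinal} (h1 : α ≤ β) (h2 : β ≤ γ) (x : E α),
      F h2 (F h1 x) = F (h1.trans h2) x)
    (Fpt : ∀ {α β : Ordinal} (h : α ≤ β), F h (pt α) = pt β)
    (hsurj : ∀ δ, δ < κ.ord → Order.IsSuccLimit δ → ∀ x : E δ,
      ∃ (α : Ordinal) (h : α < δ) (y : E α), F h.le y = x)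
    (hcard : ∀ α, α < κ.ord → Cardinal.mk (E α) < κ)
    (hstep : ∀ α, α < κ.ord → ∃ x : E α, x ≠ pt α ∧ F (Order.le_succ α) x = pt (Order.succ α)) :
    False := by
  have hlim : IsSuccLimit κ.ord := isSuccLimit_ord hreg.aleph0_le
  have hbound : ∀ α, ∃ γ < κ.ord, α < κ.ord → ∀ y : E α, ∀ β < κ.ord,
      (∃ h : α ≤ β, F h y = pt β) → ∃ β ≤ γ, ∃ h : α ≤ β, F h y = pt β := fun α => by
    by_cases hα : α < κ.ord
    · obtain ⟨γ, hγ, h⟩ := exists_lt_forall_exists_le_of_mk_lt_cof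
        (by rw [hreg.cof_ord]; exact hcard α hα) fun (y : E α) β => ∃ h : α ≤ β, F h y = pt β
      exact ⟨γ, hγ, fun _ => h⟩
    · exact ⟨0, hlim.bot_lt, fun h => absurd h hα⟩
  choose H hHκ hH using hbound
  obtain ⟨δ, hδκ, hδlim, hHδ⟩ :=
    hreg.exists_isSuccLimit_forall_lt_of_forall_lt hunc H fun α _ => hHκ α
  obtain ⟨x, hx, hxpt⟩ := hstep δ hδκ
  obtain ⟨α, hαδ, y, rfl⟩ := hsurj δ hδκ hδlim x
  obtain ⟨β, hβ, hαβ, hyβ⟩ := hH α (hαδ.trans hδκ) y (succ δ) (hlim.succ_lt hδκ)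
    ⟨hαδ.le.trans (le_succ δ), by rw [← Fcomp]; exact hxpt⟩
  apply hx
  rw [← Fcomp hαβ (hβ.trans_lt (hHδ α hαδ)).le, hyβ, Fpt]

/-- Let `κ` be a regular uncountable cardinal.  Suppose for each ordinal
`α < κ` we have a pointed set `(E α, pt α)` together with maps `φ_α : E α → E (α+1)`
preserving the base point (here encoded as a functorial system `F` of transition maps,
whose restriction to successor steps plays the role of the `φ_α`), such that for every
limit ordinal `δ < κ` the set `E δ` is the colimit of the directed system `(E α)_{α<δ}`
(expressed by joint surjectivity `hsurj` and detection of equalities at finite stages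
`heq`).  If (1) `card (E α) < κ` for all `α < κ`, and (2) for every `α < κ` there is
`x ∈ E α` with `x ≠ pt α` mapping to the base point of `E (α+1)`, then we obtain a
contradiction: no such system exists. -/
theorem stmt0 {κ : Cardinal} (hreg : κ.IsRegular) (hunc : Cardinal.aleph0 < κ)
    (E : Ordinal → Type*) (pt : ∀ α, E α)
    (F : ∀ {α β : Ordinal}, α ≤ β → E α → E β)
    (Fid : ∀ (α) (x : E α), F (le_refl α) x = x)
    (Fcomp : ∀ {α β γ : Ordinal} (h1 : α ≤ β) (h2 : β ≤ γ) (x : E α),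
      F h2 (F h1 x) = F (h1.trans h2) x)
    (Fpt : ∀ {α β : Ordinal} (h : α ≤ β), F h (pt α) = pt β)
    (hsurj : ∀ δ, δ < κ.ord → Order.IsSuccLimit δ → ∀ x : E δ,
      ∃ (α : Ordinal) (h : α < δ) (y : E α), F h.le y = x)
    (heq : ∀ δ, δ < κ.ord → Order.IsSuccLimit δ → ∀ (α : Ordinal) (h : α < δ) (x y : E α),
      F h.le x = F h.le y → ∃ (β : Ordinal) (_ : β < δ) (hαβ : α ≤ β), F hαβ x = F hαβ y)
    (hcard : ∀ α, α < κ.ord → Cardinal.mk (E α) < κ)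
    (hstep : ∀ α, α < κ.ord → ∃ x : E α, x ≠ pt α ∧ F (Order.le_succ α) x = pt (Order.succ α)) :
    False :=
  stmt0_general hreg hunc E pt F Fcomp Fpt hsurj hcard hstep
end

section
/- Let p be a prime with p ≡ 1 (mod 3), and let a ∈ ℤ_p^× be a unit whose reduction modulo p is not a cube in 𝔽_p^×. Then the cubic surface X ⊂ ℙ³_{ℚ_p} defined by T₀³ + p·T₁³ + p²·T₂³ − a·T₃³ = 0 has no ℚ_p-rational point. -/
/-!
Let `(x, y, z, w)` be a solution in `ℤ_p`. Modulo `p` the equation reads `x³ = a w³`, and since `a`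
is not a cube in `𝔽_p` this forces `p ∣ w`, hence `p ∣ x`. Then `p³` divides
`x³ + p y³ + p² z³`, and as the three terms have valuations in distinct classes mod 3, `p` divides
`y` and `z` too. Dividing by `p` gives a new solution, so by infinite descent every coordinate is
divisible by all powers of `p`, hence zero. A solution in `ℚ_p` is made integral by clearing
denominators.
-/

def cubicSurfaceForm {R : Type*} [CommRing R] (π a : R) (T : Fin 4 → R) : R :=
  T 0 ^ 3 + π * T 1 ^ 3 + π ^ 2 * T 2 ^ 3 - a * T 3 ^ 3

lemma eq_zero_of_pow_three_eq_mul_pow_three {K : Type*} [Field K] {b u v : K}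
    (hb : ¬∃ t, t ^ 3 = b) (h : u ^ 3 = b * v ^ 3) : v = 0 := by
  by_contra hv
  exact hb ⟨u / v, by rw [div_pow, h, mul_div_cancel_right₀ _ (pow_ne_zero 3 hv)]⟩

section

variable {R : Type*} [CommRing R]

lemma cubicSurfaceForm_smul (π a c : R) (T : Fin 4 → R) :
    cubicSurfaceForm π a (c • T) = c ^ 3 * cubicSurfaceForm π a T := by
  simp only [cubicSurfaceForm, Pi.smul_apply, smul_eq_mul]
  ring

lemma map_cubicSurfaceForm {S : Type*} [CommRing S] (f : R →+* S) (π a : R) (T : Fin 4 → R) :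
    f (cubicSurfaceForm π a T) = cubicSurfaceForm (f π) (f a) (f ∘ T) := by
  simp [cubicSurfaceForm]

lemma prime_of_ker_eq_span {k : Type*} [Field k] (φ : R →+* k) {π : R}
    (hφ : RingHom.ker φ = Ideal.span {π}) (hπ : π ≠ 0) : Prime π :=
  (Ideal.span_singleton_prime hπ).1 (hφ ▸ RingHom.ker_isPrime φ)

variable [IsDomain R]

theorem IsFractionRing.eq_zero_of_cubicSurfaceForm_eq_zero {K : Type*} [Field K] [Algebra R K]
    [IsFractionRing R K] {π a : R} (h : ∀ T : Fin 4 → R, cubicSurfaceForm π a T = 0 → T = 0)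
    {T : Fin 4 → K} (hT : cubicSurfaceForm (algebraMap R K π) (algebraMap R K a) T = 0) :
    T = 0 := by
  obtain ⟨b, hb⟩ := IsLocalization.exist_integer_multiples_of_finite (nonZeroDivisors R) T
  choose x hx using hb
  have hb0 : algebraMap R K b ≠ 0 := IsFractionRing.to_map_ne_zero_of_mem_nonZeroDivisors b.2
  have hxT : algebraMap R K ∘ x = algebraMap R K b • T := funext fun i => by
    simp [hx i, Algebra.smul_def]
  have hx0 : x = 0 := h x <| IsFractionRing.injective R K <| by
    rw [map_cubicSurfaceForm, hxT, cubicSurfaceForm_smul, hT, mul_zero, map_zero]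
  funext i
  simpa [hx0, hb0] using (congrFun hxT i).symm

lemma Prime.dvd_of_pow_three_dvd {π x y z : R} (hπ : Prime π)
    (h : π ^ 3 ∣ x ^ 3 + π * y ^ 3 + π ^ 2 * z ^ 3) : π ∣ x ∧ π ∣ y ∧ π ∣ z := by
  have hx : π ∣ x := hπ.dvd_of_dvd_pow (n := 3) <| by
    have := dvd_sub ((dvd_pow_self π three_ne_zero).trans h) (dvd_mul_right π (y ^ 3 + π * z ^ 3))
    convert this using 1; ring
  have hyz : π ^ 2 ∣ y ^ 3 + π * z ^ 3 := by
    rw [← mul_dvd_mul_iff_left hπ.ne_zero]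
    convert dvd_sub h (pow_dvd_pow_of_dvd hx 3) using 1 <;> ring
  have hy : π ∣ y := hπ.dvd_of_dvd_pow (n := 3) <|
    (dvd_add_left (dvd_mul_right π _)).mp ((dvd_pow_self π two_ne_zero).trans hyz)
  have hz : π ∣ z := hπ.dvd_of_dvd_pow (n := 3) <| by
    rw [← mul_dvd_mul_iff_left hπ.ne_zero, ← pow_two]
    have hy3 : π ^ 2 ∣ y ^ 3 := (pow_dvd_pow π (by norm_num)).trans (pow_dvd_pow_of_dvd hy 3)
    simpa using dvd_sub hyz hy3
  exact ⟨hx, hy, hz⟩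

variable {k : Type*} [Field k] (φ : R →+* k) {π a : R}
  (hφ : RingHom.ker φ = Ideal.span {π}) (hπ : π ≠ 0) (ha : ¬∃ t, t ^ 3 = φ a)
include hφ hπ ha

lemma dvd_of_cubicSurfaceForm_eq_zero {T : Fin 4 → R} (hT : cubicSurfaceForm π a T = 0)
    (i : Fin 4) : π ∣ T i := by
  have hker (x : R) : φ x = 0 ↔ π ∣ x := by
    rw [← RingHom.mem_ker, hφ, Ideal.mem_span_singleton]
  have hw : π ∣ T 3 := by
    refine (hker _).1 (eq_zero_of_pow_three_eq_mul_pow_three ha (u := φ (T 0)) ?_)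
    have := congrArg φ hT
    rw [map_cubicSurfaceForm, (hker π).2 dvd_rfl] at this
    simpa [cubicSurfaceForm, sub_eq_zero] using this
  have hsum : π ^ 3 ∣ T 0 ^ 3 + π * T 1 ^ 3 + π ^ 2 * T 2 ^ 3 := by
    rw [sub_eq_zero.mp hT]
    exact dvd_mul_of_dvd_right (pow_dvd_pow_of_dvd hw 3) a
  obtain ⟨h0, h1, h2⟩ := (prime_of_ker_eq_span φ hφ hπ).dvd_of_pow_three_dvd hsum
  fin_cases i <;> assumption

lemma pow_dvd_of_cubicSurfaceForm_eq_zero (n : ℕ) :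
    ∀ T : Fin 4 → R, cubicSurfaceForm π a T = 0 → ∀ i, π ^ n ∣ T i := by
  induction n with
  | zero => simp
  | succ n ih =>
    intro T hT i
    choose T' hT' using dvd_of_cubicSurfaceForm_eq_zero φ hφ hπ ha hT
    have hT'_zero : cubicSurfaceForm π a T' = 0 := by
      rw [show T = π • T' from funext hT', cubicSurfaceForm_smul] at hT
      exact (mul_eq_zero.mp hT).resolve_left (pow_ne_zero 3 hπ)
    rw [hT' i, pow_succ']
    exact mul_dvd_mul_left π (ih T' hT'_zero i)

theorem eq_zero_of_cubicSurfaceForm_eq_zero [IsNoetherianRing R] {T : Fin 4 → R}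
    (hT : cubicSurfaceForm π a T = 0) : T = 0 := by
  have hne_top : Ideal.span {π} ≠ ⊤ := by
    rw [Ne, Ideal.span_singleton_eq_top]
    exact (prime_of_ker_eq_span φ hφ hπ).not_isUnit
  funext i
  have hmem : T i ∈ ⨅ n : ℕ, Ideal.span {π} ^ n := Ideal.mem_iInf.2 fun n => by
    rw [Ideal.span_singleton_pow, Ideal.mem_span_singleton]
    exact pow_dvd_of_cubicSurfaceForm_eq_zero φ hφ hπ ha n T hT i
  rwa [Ideal.iInf_pow_eq_bot_of_isDomain _ hne_top] at hmem

end

theorem stmt1_general (p : ℕ) [Fact p.Prime]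
    (a : ℤ_[p])
    (hcube : ¬ ∃ t : ZMod p, t ^ 3 = PadicInt.toZMod a) :
    ∀ T : Fin 4 → ℚ_[p],
      (T 0) ^ 3 + (p : ℚ_[p]) * (T 1) ^ 3 + (p : ℚ_[p]) ^ 2 * (T 2) ^ 3
        - (a : ℚ_[p]) * (T 3) ^ 3 = 0 → T = 0 := by
  intro T hT
  have hp : (p : ℤ_[p]) ≠ 0 := Nat.cast_ne_zero.2 (Fact.out : p.Prime).ne_zero
  have hker : RingHom.ker PadicInt.toZMod = Ideal.span {(p : ℤ_[p])} := by
    rw [PadicInt.ker_toZMod, PadicInt.maximalIdeal_eq_span_p]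
  refine IsFractionRing.eq_zero_of_cubicSurfaceForm_eq_zero
    (fun _ => eq_zero_of_cubicSurfaceForm_eq_zero PadicInt.toZMod hker hp hcube) ?_
  simpa [cubicSurfaceForm] using hT

/-- Let `p` be a prime with `p ≡ 1 (mod 3)`, and let `a ∈ ℤ_p^×` be a unit
whose reduction modulo `p` is not a cube in `𝔽_p`.  Then the cubic surface
`T₀³ + p T₁³ + p² T₂³ − a T₃³ = 0` in `ℙ³` over `ℚ_p` has no `ℚ_p`-rational point,
i.e. the equation has no nonzero solution `(T₀,T₁,T₂,T₃) ∈ ℚ_p⁴`. -/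
theorem stmt1 (p : ℕ) [Fact p.Prime] (hp3 : p % 3 = 1)
    (a : ℤ_[p]) (ha : IsUnit a)
    (hcube : ¬ ∃ t : ZMod p, t ^ 3 = PadicInt.toZMod a) :
    ∀ T : Fin 4 → ℚ_[p],
      (T 0) ^ 3 + (p : ℚ_[p]) * (T 1) ^ 3 + (p : ℚ_[p]) ^ 2 * (T 2) ^ 3
        - (a : ℚ_[p]) * (T 3) ^ 3 = 0 → T = 0 :=
  stmt1_general p a hcube
end

section
/- Let X be a smooth cubic surface over a perfect field k such that the Galois invariants (Pic X̄)^G of the geometric Picard group are of rank 1. Then the natural injections ℤ·K_X ↪ Pic X ↪ (Pic X̄)^G are all equalities; in particular Pic X is generated by the canonical class. The key point: the class K_X is not divisible in Pic X̄ because its intersection number with a line on X̄ is −1. -/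
/-! `K_X` lies in the invariant lattice `ℤ·c`, say `K_X = n • c`. Pairing with a line gives
`n · (L·c) = L·K_X = -1`, so `n = ±1` and `K_X` already generates `ℤ·c`; the chain
`ℤ·K_X ⊆ Pic X ⊆ (Pic X̄)^G = ℤ·c` therefore collapses. -/

namespace AddSubgroup

variable {M : Type*} [AddGroup M]

theorem zmultiples_eq_of_mem_zmultiples_of_isUnit {K c : M} (hK : K ∈ zmultiples c)
    (φ : M →+ ℤ) (hφK : IsUnit (φ K)) : zmultiples K = zmultiples c := by
  obtain ⟨n, rfl⟩ := mem_zmultiples_iff.mp hK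
  have hn : IsUnit n := by
    rw [map_zsmul, smul_eq_mul] at hφK
    exact isUnit_of_mul_isUnit_left hφK
  rcases Int.isUnit_iff.mp hn with rfl | rfl
  · rw [one_zsmul]
  · rw [neg_one_zsmul, zmultiples_neg]

end AddSubgroup

/-- Let `X` be a smooth cubic surface over a perfect field `k` such that
the Galois invariants `(Pic X̄)^G` of the geometric Picard group have rank `1`.  Then the
natural injections `ℤ·K_X ↪ Pic X ↪ (Pic X̄)^G` are all equalities; in particular `Pic X`
is generated by the canonical class.  Formalization: inside the geometric Picard group
`M = Pic X̄` sit `B = Pic X` and the invariants subgroup `C = (Pic X̄)^G`, with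
`K_X ∈ Pic X ⊆ C`; `C` has rank one, i.e. is generated by a single element (`hC`); the
key point that `K_X` is not divisible in `Pic X̄` is witnessed by intersection with a
line on `X̄`, a homomorphism `φ : Pic X̄ → ℤ` with `φ(K_X) = −1`. -/
theorem stmt15 (M : Type*) [AddCommGroup M] (K : M) (B C : AddSubgroup M)
    (hKB : K ∈ B) (hBC : B ≤ C)
    (hC : ∃ c : M, C = AddSubgroup.zmultiples c)
    (φ : M →+ ℤ) (hφ : φ K = -1) :
    AddSubgroup.zmultiples K = B ∧ B = C := by
  obtain ⟨c, rfl⟩ := hC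
  have hKc : AddSubgroup.zmultiples K = AddSubgroup.zmultiples c :=
    AddSubgroup.zmultiples_eq_of_mem_zmultiples_of_isUnit (hBC hKB) φ (hφ ▸ isUnit_one.neg)
  have hKB' : AddSubgroup.zmultiples K ≤ B := AddSubgroup.zmultiples_le_of_mem hKB
  exact ⟨le_antisymm hKB' (hKc ▸ hBC), le_antisymm hBC (hKc ▸ hKB')⟩
end

section
/- Let p be a prime and X, Y projective integral varieties of the same dimension over a field k, with a k-morphism f : Y → X. Suppose n_Y = n_X = p (indices), the Rost invariant η_p(Y) ∈ ℤ/pℤ is nonzero, and the degree formula η_p(Y) = deg(f)·η_p(X) in ℤ/pℤ holds. Then deg(f) is prime to p, and consequently the restriction map on p-torsion Brauer groups Br(k(X))[p] → Br(k(Y))[p] induced by f is injective. -/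
open Function

theorem not_dvd_of_zsmul_ne_zero {n : ℕ} {d : ℤ} {x : ZMod n} (h : d • x ≠ 0) :
    ¬ (n : ℤ) ∣ d := by
  intro hnd
  apply h
  rw [zsmul_eq_mul, (ZMod.intCast_zmod_eq_zero_iff_dvd d n).2 hnd, zero_mul]

theorem eq_zero_of_zsmul_eq_zero_of_isCoprime {A : Type*} [AddCommGroup A] {d n : ℤ}
    (hdn : IsCoprime d n) {x : A} (hd : d • x = 0) (hn : n • x = 0) : x = 0 := by
  obtain ⟨u, v, huv⟩ := hdn
  calc x = (u * d + v * n) • x := by rw [huv, one_zsmul]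
    _ = u • (d • x) + v • (n • x) := by rw [add_zsmul, mul_zsmul, mul_zsmul]
    _ = 0 := by rw [hd, hn, zsmul_zero, zsmul_zero, add_zero]

theorem AddMonoidHom.injective_of_comp_eq_zsmul {A B : Type*} [AddCommGroup A]
    [AddCommGroup B] (f : A →+ B) (g : B →+ A) {d n : ℤ} (hdn : IsCoprime d n)
    (hgf : ∀ x, g (f x) = d • x) (hn : ∀ x : A, n • x = 0) : Injective f := by
  refine (injective_iff_map_eq_zero f).2 fun x hx => ?_
  refine eq_zero_of_zsmul_eq_zero_of_isCoprime hdn ?_ (hn x)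
  rw [← hgf x, hx, map_zero]

/-- Let `p` be a prime and `X`, `Y` projective integral varieties of the
same dimension over a field `k`, with a `k`-morphism `f : Y → X`.  Suppose the indices
satisfy `n_Y = n_X = p` (so Rost's invariants `η_p(Y), η_p(X)` live in `ℤ/pℤ`), that
`η_p(Y) ≠ 0`, and that the degree formula `η_p(Y) = deg(f)·η_p(X)` holds in `ℤ/pℤ`.
Then `deg f` is prime to `p`, and consequently the restriction map on `p`-torsion Brauer
groups `Br(k(X))[p] → Br(k(Y))[p]` induced by `f` is injective.  Formalization: `d` is
`deg f`; `BrX`, `BrY` are the `p`-torsion subgroups of `Br k(X)`, `Br k(Y)` (so `p•x = 0`,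
`htors`), with restriction `res` and corestriction `cores` satisfying
`cores ∘ res = deg(f) • id` (`hrescores`, the standard fact for a degree-`d` extension of
function fields). -/
theorem stmt17 (p : ℕ) (hp : p.Prime) (d : ℤ)
    (ηX ηY : ZMod p) (hηY : ηY ≠ 0) (hformula : ηY = d • ηX)
    (BrX BrY : Type*) [AddCommGroup BrX] [AddCommGroup BrY]
    (res : BrX →+ BrY) (cores : BrY →+ BrX)
    (hrescores : ∀ x : BrX, cores (res x) = d • x)
    (htors : ∀ x : BrX, (p : ℤ) • x = 0) :
    ¬ (p : ℤ) ∣ d ∧ Function.Injective res := by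
  have hnd : ¬ (p : ℤ) ∣ d := not_dvd_of_zsmul_ne_zero (hformula ▸ hηY)
  have hcop : IsCoprime d p :=
    ((Nat.prime_iff_prime_int.1 hp).coprime_iff_not_dvd.2 hnd).symm
  exact ⟨hnd, res.injective_of_comp_eq_zsmul cores hcop hrescores htors⟩
end
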